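/- arXiv:1705.02631 — 3 statements merged into one kernel-verified Lean document; each statement's English description precedes it below -/
import Mathlib

section
/- Let A and B be n×n matrices over a field of characteristic 0 with Aᵀ = A and Bᵀ = −B, let i ≥ 1, and set s = (A·B)^(2i−1). Then s·A + A·sᵀ = 0 and sᵀ·B + B·s = 0. -/
open Matrix

lemma shift_pow {n : ℕ} {K : Type*} [Field K] (A B : Matrix (Fin n) (Fin n) K) (m : ℕ) :
    A * (B * A) ^ m = (A * B) ^ m * A := by
  induction m with
  | zero => simp
  | succ k ih =>
    rw [pow_succ', ← mul_assoc, ← mul_assoc A B A, mul_assoc (A*B) A, ih, ← mul_assoc, ← pow_succ']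

theorem odd_pow_symm_mul_skew_in_kernel {n : ℕ} {K : Type*} [Field K] [CharZero K]
    (A B : Matrix (Fin n) (Fin n) K) (hA : Aᵀ = A) (hB : Bᵀ = -B)
    (i : ℕ) (hi : 1 ≤ i) :
    ((A * B) ^ (2 * i - 1)) * A + A * ((A * B) ^ (2 * i - 1))ᵀ = 0 ∧
    ((A * B) ^ (2 * i - 1))ᵀ * B + B * ((A * B) ^ (2 * i - 1)) = 0 := by
  set m := 2 * i - 1 with hm
  have hodd : Odd m := by
    refine ⟨i - 1, ?_⟩
    omega
  have hT : ((A * B) ^ m)ᵀ = -((B * A) ^ m) := by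
    rw [transpose_pow, transpose_mul, hA, hB, neg_mul, hodd.neg_pow]
  constructor
  · rw [hT, mul_neg, shift_pow, add_neg_cancel]
  · rw [hT, neg_mul, shift_pow B A m, neg_add_cancel]
end

section
/- Let A and B be arbitrary n×n matrices over a field (or commutative ring) and λ a scalar. Then B·adjugate(A + λB)·A = A·adjugate(A + λB)·B. -/
theorem skew_adjugate_pencil_identity {n : ℕ} {R : Type*} [CommRing R]
    (A B : Matrix (Fin n) (Fin n) R) (l : R) :
    B * (A + l • B).adjugate * A = A * (A + l • B).adjugate * B := by
  set C := A + l • B with hC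
  have hA : A = C - l • B := by rw [hC]; abel
  rw [hA, Matrix.mul_sub, Matrix.sub_mul, Matrix.mul_assoc, Matrix.mul_assoc,
    Matrix.adjugate_mul, Matrix.mul_adjugate, Matrix.sub_mul, Matrix.smul_mul,
    Matrix.one_mul]
  simp [Matrix.mul_smul, Matrix.smul_mul, Matrix.mul_assoc]
end

section
/- Let A and B be n×n matrices over a field of characteristic 0 with Aᵀ = A and Bᵀ = −B. Define H(λ) = B·adjugate(A + λB)·A + A·(B·adjugate(A + λB))ᵀ. Then H(λ) = −H(−λ) for all scalars λ; i.e., H is an odd polynomial function of λ. -/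
open Matrix

private lemma MSN_eq {n : ℕ} {K : Type*} [Field K]
    (M N : Matrix (Fin n) (Fin n) K) :
    M * (M.adjugate + N.adjugate) * N = M.det • N + N.det • M := by
  rw [mul_add, add_mul, mul_adjugate, mul_assoc, adjugate_mul, smul_mul_assoc,
    one_mul, mul_smul_comm, mul_one]

private lemma key_lemma {n : ℕ} {K : Type*} [Field K] [CharZero K]
    (A B : Matrix (Fin n) (Fin n) K) (hA : Aᵀ = A) (hB : Bᵀ = -B) (l : K) :
    B * ((A + l • B).adjugate + (A + (-l) • B).adjugate) * A =
      A * ((A + l • B).adjugate + (A + (-l) • B).adjugate) * B := by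
  set M := A + l • B with hM
  set N := A + (-l) • B with hN
  set S := M.adjugate + N.adjugate with hS
  rcases eq_or_ne l 0 with rfl | hl
  · have hMN : M = A := by simp [hM]
    have hNA : N = A := by simp [hN]
    rw [hS, hMN, hNA]
    have c : B * A.adjugate * A = A * A.adjugate * B := by
      rw [mul_assoc, adjugate_mul, mul_adjugate, mul_smul_comm, mul_one, smul_mul_assoc,
        one_mul]
    simp only [mul_add, add_mul]
    rw [c]
  · have hMSN : M * S * N = N * S * M := by
      rw [hS, MSN_eq]
      have := MSN_eq N M
      rw [add_comm N.adjugate] at this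
      rw [this, add_comm]
    have hsum : M + N = (2 : K) • A := by
      rw [hM, hN]
      module
    have hdiff : M - N = (2 * l) • B := by
      rw [hM, hN]
      module
    have e1 : (M + N) * S * (M - N) = M*S*M - M*S*N + N*S*M - N*S*N := by noncomm_ring
    have e2 : (M - N) * S * (M + N) = M*S*M + M*S*N - N*S*M - N*S*N := by noncomm_ring
    have e3 : (M + N) * S * (M - N) = (M - N) * S * (M + N) := by
      rw [e1, e2, hMSN]; abel
    rw [hsum, hdiff] at e3
    have e4 : (2 * (2 * l)) • (A * S * B) = (2 * (2 * l)) • (B * S * A) := by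
      have lhs : ((2:K) • A) * S * ((2*l) • B) = (2 * (2*l)) • (A * S * B) := by
        rw [smul_mul_assoc, smul_mul_assoc, mul_smul_comm, smul_smul]
      have rhs : ((2*l : K) • B) * S * ((2:K) • A) = (2 * (2*l)) • (B * S * A) := by
        rw [smul_mul_assoc, smul_mul_assoc, mul_smul_comm, smul_smul, mul_comm (2*l) 2]
      rw [lhs, rhs] at e3
      exact e3
    have hne : (2 * (2 * l) : K) ≠ 0 := by
      simp [hl]
    exact (smul_right_injective _ hne e4).symm

theorem kernel_covariant_pencil_odd {n : ℕ} {K : Type*} [Field K] [CharZero K]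
    (A B : Matrix (Fin n) (Fin n) K) (hA : Aᵀ = A) (hB : Bᵀ = -B) (l : K) :
    B * (A + l • B).adjugate * A + A * (B * (A + l • B).adjugate)ᵀ =
      -(B * (A + (-l) • B).adjugate * A + A * (B * (A + (-l) • B).adjugate)ᵀ) := by
  set M := A + l • B with hM
  set N := A + (-l) • B with hN
  have hMT : Mᵀ = N := by
    rw [hM, hN, transpose_add, transpose_smul, hA, hB]
    module
  have hNT : Nᵀ = M := by
    rw [← hMT, transpose_transpose]
  have hadjM : N.adjugate = M.adjugateᵀ := by
    rw [← hMT, adjugate_transpose]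
  have hadjN : M.adjugate = N.adjugateᵀ := by
    rw [← hNT, adjugate_transpose]
  have h1 : (B * M.adjugate)ᵀ = N.adjugate * (-B) := by
    rw [transpose_mul, hB, ← hadjM]
  have h2 : (B * N.adjugate)ᵀ = M.adjugate * (-B) := by
    rw [transpose_mul, hB, ← hadjN]
  rw [h1, h2]
  have key := key_lemma A B hA hB l
  rw [← hM, ← hN] at key
  rw [mul_add, add_mul, mul_add, add_mul] at key
  -- key : B * M.adjugate * A + B * N.adjugate * A = A * M.adjugate * B + A * N.adjugate * B
  have expand : A * (M.adjugate * -B) = -(A * M.adjugate * B) := by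
    simp [mul_assoc]
  have expand2 : A * (N.adjugate * -B) = -(A * N.adjugate * B) := by
    simp [mul_assoc]
  rw [expand, expand2]
  linear_combination (norm := noncomm_ring) key
end
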